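/- Let r ≥ 3 and n ≥ 1 be integers and let χ(2, …, 2; n) denote χ evaluated at r copies of 2. If n is even then χ(2, …, 2; n) > 0, and if n is odd then χ(2, …, 2; n) < 0. Equivalently, (−1)ⁿ · χ(2, …, 2; n) > 0 for all r ≥ 3 and n ≥ 1. -/

import Mathlib

/-!
With `N = n + r + 1`, the number `(-1)ⁿ χ(2,…,2; n) / 2ʳ` is the coefficient `D(r, n)` of `tⁿ`
in `(1 - t)ᴺ (1 - 2t)⁻ʳ`. The identities `(1 - t)ᴺ⁺¹ = (1 - t)ᴺ - t (1 - t)ᴺ` and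
`(1 - 2t) (1 - 2t)⁻⁽ʳ⁺¹⁾ = (1 - 2t)⁻ʳ` give the Pascal-type recurrence
`D(r + 1, n + 1) = D(r, n + 1) + D(r + 1, n)`, with `D(r, 0) = 1` and `D(0, n) = (-1)ⁿ (n + 1)`.
Hence `D(2, n)` is `n / 2 + 1` for even `n` and `0` for odd `n`, and every further step in `r`
turns nonnegative values into values `≥ 1`.
-/

/-- `hcomplete k d` is the complete homogeneous symmetric polynomial
`h_k(d₁,…,d_r) = ∑_{i₁+⋯+i_r=k} d₁^{i₁}⋯d_r^{i_r}` evaluated at the tuple `d`. -/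
def hcomplete {r : ℕ} (k : ℕ) (d : Fin r → ℤ) : ℤ :=
  ∑ f ∈ Finset.Nat.antidiagonalTuple r k, ∏ j, d j ^ f j

/-- `chi d n = d₁⋯d_r · ∑_{i=0}^{n} (−1)^{n−i} · binom(n+r+1, i) · h_{n−i}(d₁,…,d_r)`,
which by a theorem of Azuma is the degree of the top Chern class of an `n`-dimensional
smooth complete intersection of hypersurfaces of degrees `d₁,…,d_r` in `ℙ^{n+r}`. -/
def chi {r : ℕ} (d : Fin r → ℤ) (n : ℕ) : ℤ :=
  (∏ j, d j) * ∑ i ∈ Finset.range (n + 1),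
    (-1) ^ (n - i) * ((n + r + 1).choose i : ℤ) * hcomplete (n - i) d

open Finset PowerSeries

theorem Finset.Nat.card_antidiagonalTuple (r k : ℕ) :
    #(Nat.antidiagonalTuple r k) = (r + k - 1).choose k := by
  rw [card_eq_of_equiv_fintype ((Equiv.subtypeEquivRight fun _ => Nat.mem_antidiagonalTuple).trans
    (Sym.equivNatSumOfFintype (Fin r) k).symm), Sym.card_sym_eq_choose, Fintype.card_fin]

theorem PowerSeries.coeff_one_sub_X_pow {R : Type*} [CommRing R] (N i : ℕ) :
    coeff i ((1 - X : R⟦X⟧) ^ N) = (-1) ^ i * N.choose i := by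
  have h : (1 - X : R⟦X⟧) = rescale (-1) ((1 + Polynomial.X : Polynomial R) : R⟦X⟧) := by
    simp [rescale_X, sub_eq_add_neg]
  rw [h, ← map_pow, coeff_rescale, ← Polynomial.coe_pow, Polynomial.coeff_coe,
    Polynomial.coeff_one_add_X_pow]

theorem neg_one_pow_mul_self {M : Type*} [Monoid M] [HasDistribNeg M] (n : ℕ) :
    (-1 : M) ^ n * (-1) ^ n = 1 := by
  rw [← pow_add, ← two_mul, pow_mul, neg_one_sq, one_pow]

theorem hcomplete_zero {r : ℕ} (d : Fin r → ℤ) : hcomplete 0 d = 1 := by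
  simp [hcomplete, Nat.antidiagonalTuple_zero_right]

theorem hcomplete_const (r k : ℕ) (c : ℤ) :
    hcomplete k (fun _ : Fin r => c) = c ^ k * (r + k - 1).choose k := by
  have h : ∀ f ∈ Nat.antidiagonalTuple r k, ∏ j, c ^ f j = c ^ k := fun f hf => by
    rw [prod_pow_eq_pow_sum, (Nat.mem_antidiagonalTuple.mp hf)]
  rw [hcomplete, sum_congr rfl h, sum_const, Nat.card_antidiagonalTuple, nsmul_eq_mul, mul_comm]

/-- `∑ₖ hₖ(d) tᵏ = ∏ⱼ (1 - dⱼ t)⁻¹` -/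
def hcompleteSeries {r : ℕ} (d : Fin r → ℤ) : ℤ⟦X⟧ :=
  mk fun k => hcomplete k d

theorem chi_eq_coeff {r : ℕ} (d : Fin r → ℤ) (n : ℕ) :
    chi d n = (∏ j, d j) * ((-1) ^ n * coeff n ((1 - X) ^ (n + r + 1) * hcompleteSeries d)) := by
  rw [chi, coeff_mul, Finset.Nat.sum_antidiagonal_eq_sum_range_succ_mk]
  congr 1
  rw [mul_sum]
  refine sum_congr rfl fun i hi => ?_
  obtain ⟨j, rfl⟩ := Nat.exists_eq_add_of_le (Nat.lt_succ_iff.mp (mem_range.mp hi))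
  simp only [coeff_one_sub_X_pow, hcompleteSeries, coeff_mk, Nat.add_sub_cancel_left]
  linear_combination (-(-1) ^ j * ((i + j + r + 1).choose i : ℤ) * hcomplete j d) *
    neg_one_pow_mul_self (M := ℤ) i

theorem one_sub_C_mul_X_mul_hcompleteSeries_const (r : ℕ) (c : ℤ) :
    (1 - C c * X) * hcompleteSeries (fun _ : Fin (r + 1) => c) =
      hcompleteSeries (fun _ : Fin r => c) := by
  ext (_ | k)
  · simp [hcompleteSeries, hcomplete_zero]
  · rw [sub_mul, one_mul, mul_assoc, map_sub, coeff_C_mul, coeff_succ_X_mul]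
    simp only [hcompleteSeries, coeff_mk, hcomplete_const]
    rw [show r + (k + 1) - 1 = r + k by omega, show r + 1 + (k + 1) - 1 = (r + k) + 1 by omega,
      show r + 1 + k - 1 = r + k by omega, Nat.choose_succ_succ']
    push_cast
    ring

theorem hcompleteSeries_fin_zero (d : Fin 0 → ℤ) : hcompleteSeries d = 1 := by
  ext (_ | k)
  · simp [hcompleteSeries, hcomplete_zero]
  · simp [hcompleteSeries, hcomplete, Nat.antidiagonalTuple_zero_succ]

/-- `(-1)ⁿ χ(2,…,2; n) / 2ʳ` -/
noncomputable def chiQuadricsNormalized (r n : ℕ) : ℤ :=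
  coeff n ((1 - X) ^ (n + r + 1) * hcompleteSeries (fun _ : Fin r => (2 : ℤ)))

theorem neg_one_pow_mul_chi_two (r n : ℕ) :
    (-1) ^ n * chi (fun _ : Fin r => (2 : ℤ)) n = 2 ^ r * chiQuadricsNormalized r n := by
  rw [chi_eq_coeff, prod_const, card_univ, Fintype.card_fin, chiQuadricsNormalized,
    mul_left_comm, ← mul_assoc ((-1 : ℤ) ^ n), neg_one_pow_mul_self, one_mul]

theorem chiQuadricsNormalized_zero_right (r : ℕ) : chiQuadricsNormalized r 0 = 1 := by
  simp [chiQuadricsNormalized, hcompleteSeries, hcomplete_zero]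

theorem chiQuadricsNormalized_zero_left (n : ℕ) :
    chiQuadricsNormalized 0 n = (-1) ^ n * (n + 1) := by
  simp [chiQuadricsNormalized, hcompleteSeries_fin_zero, coeff_one_sub_X_pow]

theorem chiQuadricsNormalized_succ_succ (r n : ℕ) :
    chiQuadricsNormalized (r + 1) (n + 1) =
      chiQuadricsNormalized r (n + 1) + chiQuadricsNormalized (r + 1) n := by
  set F := (1 - X) ^ (n + r + 2) * hcompleteSeries (fun _ : Fin (r + 1) => (2 : ℤ))
  have hl : chiQuadricsNormalized (r + 1) (n + 1) = coeff (n + 1) F - coeff n F := by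
    rw [chiQuadricsNormalized, show n + 1 + (r + 1) + 1 = (n + r + 2) + 1 by ring, pow_succ',
      mul_assoc, sub_mul, one_mul, map_sub, coeff_succ_X_mul]
  have hr : chiQuadricsNormalized r (n + 1) = coeff (n + 1) F - 2 * coeff n F := by
    rw [chiQuadricsNormalized, ← one_sub_C_mul_X_mul_hcompleteSeries_const, mul_left_comm,
      sub_mul, one_mul, mul_assoc, map_sub, coeff_C_mul, coeff_succ_X_mul,
      show n + 1 + r + 1 = n + r + 2 by ring]
  have hn : chiQuadricsNormalized (r + 1) n = coeff n F := by
    rw [chiQuadricsNormalized, show n + (r + 1) + 1 = n + r + 2 by ring]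
  rw [hl, hr, hn]
  ring

theorem chiQuadricsNormalized_one (n : ℕ) :
    chiQuadricsNormalized 1 n = (-1) ^ n * (n / 2 + 1 : ℕ) := by
  induction n with
  | zero => simp [chiQuadricsNormalized_zero_right]
  | succ n ih =>
    rw [chiQuadricsNormalized_succ_succ, ih, chiQuadricsNormalized_zero_left, pow_succ]
    have hhalf : ((n + 1) / 2 + 1 : ℕ) = (n + 1 + 1 : ℤ) - (n / 2 + 1 : ℕ) := by omega
    rw [hhalf]
    push_cast
    ring

theorem chiQuadricsNormalized_two (n : ℕ) :
    chiQuadricsNormalized 2 n = if Even n then (n / 2 + 1 : ℕ) else 0 := by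
  induction n with
  | zero => simp [chiQuadricsNormalized_zero_right]
  | succ n ih =>
    rw [chiQuadricsNormalized_succ_succ, ih, chiQuadricsNormalized_one]
    rcases Nat.even_or_odd n with hn | hn
    · rw [if_pos hn, if_neg (Nat.not_even_iff_odd.mpr hn.add_one), hn.add_one.neg_one_pow,
        show (n + 1) / 2 = n / 2 by grind]
      ring
    · rw [if_neg (Nat.not_even_iff_odd.mpr hn), if_pos hn.add_one, hn.add_one.neg_one_pow]
      ring

theorem chiQuadricsNormalized_two_nonneg (n : ℕ) : 0 ≤ chiQuadricsNormalized 2 n := by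
  rw [chiQuadricsNormalized_two]
  split_ifs <;> positivity

theorem one_le_chiQuadricsNormalized_succ {r : ℕ} (h : ∀ n, 0 ≤ chiQuadricsNormalized r n)
    (n : ℕ) :
    1 ≤ chiQuadricsNormalized (r + 1) n := by
  induction n with
  | zero => rw [chiQuadricsNormalized_zero_right]
  | succ n ih => linarith [chiQuadricsNormalized_succ_succ r n, h (n + 1)]

theorem chiQuadricsNormalized_nonneg {r : ℕ} (hr : 2 ≤ r) (n : ℕ) :
    0 ≤ chiQuadricsNormalized r n := by
  induction r, hr using Nat.le_induction generalizing n with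
  | base => exact chiQuadricsNormalized_two_nonneg n
  | succ r _ ih => exact zero_le_one.trans (one_le_chiQuadricsNormalized_succ ih n)

theorem chi_quadrics_sign_general (r n : ℕ) (hr : 3 ≤ r) :
    ((Even n → 0 < chi (fun _ : Fin r => (2 : ℤ)) n) ∧
     (Odd n → chi (fun _ : Fin r => (2 : ℤ)) n < 0)) ∧
    0 < (-1) ^ n * chi (fun _ : Fin r => (2 : ℤ)) n := by
  obtain ⟨k, hk, rfl⟩ : ∃ k, 2 ≤ k ∧ r = k + 1 := ⟨r - 1, by omega, by omega⟩
  have hpos : 0 < (-1) ^ n * chi (fun _ : Fin (k + 1) => (2 : ℤ)) n := by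
    rw [neg_one_pow_mul_chi_two]
    exact mul_pos (by positivity)
      (one_le_chiQuadricsNormalized_succ (chiQuadricsNormalized_nonneg hk) n)
  refine ⟨⟨fun he => ?_, fun ho => ?_⟩, hpos⟩
  · rwa [he.neg_one_pow, one_mul] at hpos
  · rw [ho.neg_one_pow] at hpos
    linarith

/-- For `r ≥ 3` and `n ≥ 1`, with `χ(2,…,2; n)` denoting `χ` at `r` copies of `2`:
if `n` is even then `χ(2,…,2; n) > 0`, if `n` is odd then `χ(2,…,2; n) < 0`;
equivalently `(−1)ⁿ·χ(2,…,2; n) > 0`. -/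
theorem chi_quadrics_sign (r n : ℕ) (hr : 3 ≤ r) (hn : 1 ≤ n) :
    ((Even n → 0 < chi (fun _ : Fin r => (2 : ℤ)) n) ∧
     (Odd n → chi (fun _ : Fin r => (2 : ℤ)) n < 0)) ∧
    0 < (-1) ^ n * chi (fun _ : Fin r => (2 : ℤ)) n :=
  chi_quadrics_sign_general r n hr
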